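/- Let (a_n) ⊆ [0,1] and (c_n), (s_n) ⊆ [0,∞) be sequences of reals, and L ∈ ℕ, L ≥ 1, an upper bound on (s_n). Assume Σ_{n=0}^∞ a_n diverges with rate of divergence θ, that s_{n+1} ≤ (1 - a_n)·s_n + c_n for all n ∈ ℕ, and that Σ_{n=0}^∞ c_n converges with Cauchy modulus χ. Then s_n → 0 with rate of convergence Σ(k) = θ(χ(2k+1) + 1 + ⌈ln(2L(k+1))⌉) + 1. -/

import Mathlib

/-!
Unfolding the recursion from `m` to `n` and using `1 - x ≤ exp (-x)` gives
`s n ≤ exp (-∑_{m ≤ i < n} a i) L + ∑_{m ≤ i < n} c i`.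
Taking `m = χ(2k+1) + 1`, the Cauchy modulus bounds the `c`-tail by `1/(2(k+1))`. Past
`θ(m + ⌈ln(2L(k+1))⌉)` the sum of the `a i` exceeds `m + ⌈ln(2L(k+1))⌉`, and since every `a i ≤ 1`
at most `m` of it comes from indices below `m`; so the first term is at most
`L / (2L(k+1)) = 1/(2(k+1))` as well.
-/

open Finset Real

theorem le_prod_one_sub_mul_add_sum_Ico {a c s : ℕ → ℝ}
    (ha : ∀ n, a n ∈ Set.Icc (0 : ℝ) 1) (hc : ∀ n, 0 ≤ c n)
    (hrec : ∀ n, s (n + 1) ≤ (1 - a n) * s n + c n) {m n : ℕ} (hmn : m ≤ n) :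
    s n ≤ (∏ i ∈ Ico m n, (1 - a i)) * s m + ∑ i ∈ Ico m n, c i := by
  induction n, hmn using Nat.le_induction with
  | base => simp
  | succ n hmn ih =>
    rw [prod_Ico_succ_top hmn, sum_Ico_succ_top hmn]
    have hsum : 0 ≤ ∑ i ∈ Ico m n, c i := sum_nonneg fun i _ ↦ hc i
    have hfactor : 0 ≤ 1 - a n := sub_nonneg.2 (ha n).2
    calc s (n + 1) ≤ (1 - a n) * s n + c n := hrec n
      _ ≤ (1 - a n) * ((∏ i ∈ Ico m n, (1 - a i)) * s m + ∑ i ∈ Ico m n, c i) + c n := by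
        gcongr
      _ ≤ (∏ i ∈ Ico m n, (1 - a i)) * (1 - a n) * s m + (∑ i ∈ Ico m n, c i + c n) := by
        nlinarith [(ha n).1]

theorem prod_one_sub_le_exp_neg_sum {ι : Type*} (t : Finset ι) {a : ι → ℝ}
    (ha : ∀ i ∈ t, a i ≤ 1) : ∏ i ∈ t, (1 - a i) ≤ exp (-∑ i ∈ t, a i) := by
  rw [← sum_neg_distrib, exp_sum]
  exact prod_le_prod (fun i hi ↦ sub_nonneg.2 (ha i hi)) fun i _ ↦ one_sub_le_exp_neg (a i)

theorem le_exp_neg_sum_mul_add_sum {a c s : ℕ → ℝ} {L : ℝ}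
    (ha : ∀ n, a n ∈ Set.Icc (0 : ℝ) 1) (hc : ∀ n, 0 ≤ c n) (hL : 0 ≤ L) (hsL : ∀ n, s n ≤ L)
    (hrec : ∀ n, s (n + 1) ≤ (1 - a n) * s n + c n) {m n : ℕ} (hmn : m ≤ n) :
    s n ≤ exp (-∑ i ∈ Ico m n, a i) * L + ∑ i ∈ Ico m n, c i := by
  have hprod : 0 ≤ ∏ i ∈ Ico m n, (1 - a i) := prod_nonneg fun i _ ↦ sub_nonneg.2 (ha i).2
  calc s n ≤ (∏ i ∈ Ico m n, (1 - a i)) * s m + ∑ i ∈ Ico m n, c i :=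
        le_prod_one_sub_mul_add_sum_Ico ha hc hrec hmn
    _ ≤ exp (-∑ i ∈ Ico m n, a i) * L + ∑ i ∈ Ico m n, c i := by
        gcongr ?_ + _
        exact (mul_le_mul_of_nonneg_left (hsL m) hprod).trans <| mul_le_mul_of_nonneg_right
          (prod_one_sub_le_exp_neg_sum _ fun i _ ↦ (ha i).2) hL

theorem sum_range_le_of_le_one {a : ℕ → ℝ} (ha : ∀ n, a n ≤ 1) (n : ℕ) :
    ∑ i ∈ range n, a i ≤ n := by
  simpa using sum_le_card_nsmul (range n) a 1 fun i _ ↦ ha i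

theorem le_sum_Ico_of_add_le_sum_range {a : ℕ → ℝ} (ha : ∀ n, a n ≤ 1) {m n : ℕ} {x : ℝ}
    (h : m + x ≤ ∑ i ∈ range n, a i) : x ≤ ∑ i ∈ Ico m n, a i := by
  rcases le_total m n with hmn | hnm
  · have := sum_range_le_of_le_one ha m
    rw [← sum_range_add_sum_Ico a hmn] at h
    linarith
  · have := sum_range_le_of_le_one ha n
    have : (n : ℝ) ≤ m := by exact_mod_cast hnm
    rw [Ico_eq_empty_of_le hnm, sum_empty]
    linarith

theorem sum_Ico_le_of_forall_sum_Icc_le {c : ℕ → ℝ} {N : ℕ} {ε : ℝ}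
    (h : ∀ p, ∑ i ∈ Icc (N + 1) (N + p), c i ≤ ε) (n : ℕ) :
    ∑ i ∈ Ico (N + 1) n, c i ≤ ε := by
  rcases le_or_gt n (N + 1) with hn | hn
  · simpa [Ico_eq_empty_of_le hn] using h 0
  · obtain ⟨p, rfl⟩ : ∃ p, n = N + p + 1 := ⟨n - N - 1, by omega⟩
    rw [Ico_add_one_right_eq_Icc]
    exact h p

theorem exp_neg_mul_le_one_of_log_le {x y : ℝ} (hy : 0 ≤ y) (h : log y ≤ x) :
    exp (-x) * y ≤ 1 := by
  rcases hy.eq_or_lt with rfl | hy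
  · simp
  · rw [exp_neg, inv_mul_le_one₀ (exp_pos x)]
    exact (log_le_iff_le_exp hy).1 h

theorem xu_lemma_quantitative_cn_general (a c s : ℕ → ℝ) (L : ℕ)
    (ha : ∀ n, a n ∈ Set.Icc (0 : ℝ) 1)
    (hc : ∀ n, 0 ≤ c n)
    (hs : ∀ n, 0 ≤ s n) (hsL : ∀ n, s n ≤ L)
    (θ : ℕ → ℕ) (hθ : ∀ n : ℕ, (n : ℝ) ≤ ∑ i ∈ Finset.range (θ n + 1), a i)
    (hrec : ∀ n, s (n + 1) ≤ (1 - a n) * s n + c n)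
    (χ : ℕ → ℕ)
    (hχ : ∀ k n : ℕ, χ k ≤ n → ∀ p : ℕ,
      ∑ i ∈ Finset.Icc (n + 1) (n + p), c i ≤ 1 / ((k : ℝ) + 1)) :
    ∀ k n : ℕ, θ (χ (2 * k + 1) + 1 + ⌈Real.log (2 * (L : ℝ) * ((k : ℝ) + 1))⌉₊) + 1 ≤ n →
      |s n| ≤ 1 / ((k : ℝ) + 1) := by
  intro k n hn
  set m := χ (2 * k + 1) + 1
  set M := ⌈log (2 * (L : ℝ) * ((k : ℝ) + 1))⌉₊
  have hdiv : (m : ℝ) + M ≤ ∑ i ∈ range n, a i := by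
    exact_mod_cast (hθ (m + M)).trans <|
      sum_le_sum_of_subset_of_nonneg (range_subset_range.2 hn) fun i _ _ ↦ (ha i).1
  have hmn : m ≤ n := by
    have : m + M ≤ n := by exact_mod_cast hdiv.trans (sum_range_le_of_le_one (fun i ↦ (ha i).2) n)
    omega
  have ha_tail : log (2 * L * (k + 1)) ≤ ∑ i ∈ Ico m n, a i :=
    (Nat.le_ceil _).trans (le_sum_Ico_of_add_le_sum_range (fun i ↦ (ha i).2) hdiv)
  have hc_tail : ∑ i ∈ Ico m n, c i ≤ 1 / ((2 * k + 1 : ℕ) + 1) :=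
    sum_Ico_le_of_forall_sum_Icc_le (hχ (2 * k + 1) _ le_rfl) n
  have hexp := exp_neg_mul_le_one_of_log_le (by positivity) ha_tail
  rw [abs_of_nonneg (hs n)]
  calc s n ≤ exp (-∑ i ∈ Ico m n, a i) * L + ∑ i ∈ Ico m n, c i :=
        le_exp_neg_sum_mul_add_sum ha hc (Nat.cast_nonneg L) hsL hrec hmn
    _ ≤ 1 / (2 * (k + 1)) + 1 / (2 * (k + 1)) := by
        gcongr
        · rw [le_div_iff₀ (by positivity)]; linarith
        · exact hc_tail.trans_eq (by push_cast; ring)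
    _ = 1 / (k + 1) := by field_simp; norm_num

/-- Quantitative Xu lemma, second form: if `s_{n+1} ≤ (1-a_n)s_n + c_n` with
`(a_n) ⊆ [0,1]`, `∑ a_n` diverging with rate `θ`, `(s_n)` nonnegative bounded by `L ≥ 1`,
`(c_n)` nonnegative with `∑ c_n` converging with Cauchy modulus `χ`, then `s_n → 0` with
rate of convergence `Σ(k) = θ(χ(2k+1) + 1 + ⌈ln(2L(k+1))⌉) + 1`. -/
theorem xu_lemma_quantitative_cn (a c s : ℕ → ℝ) (L : ℕ) (hL : 1 ≤ L)
    (ha : ∀ n, a n ∈ Set.Icc (0 : ℝ) 1)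
    (hc : ∀ n, 0 ≤ c n)
    (hs : ∀ n, 0 ≤ s n) (hsL : ∀ n, s n ≤ L)
    (θ : ℕ → ℕ) (hθ : ∀ n : ℕ, (n : ℝ) ≤ ∑ i ∈ Finset.range (θ n + 1), a i)
    (hrec : ∀ n, s (n + 1) ≤ (1 - a n) * s n + c n)
    (χ : ℕ → ℕ)
    (hχ : ∀ k n : ℕ, χ k ≤ n → ∀ p : ℕ,
      ∑ i ∈ Finset.Icc (n + 1) (n + p), c i ≤ 1 / ((k : ℝ) + 1)) :
    ∀ k n : ℕ, θ (χ (2 * k + 1) + 1 + ⌈Real.log (2 * (L : ℝ) * ((k : ℝ) + 1))⌉₊) + 1 ≤ n →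
      |s n| ≤ 1 / ((k : ℝ) + 1) :=
  xu_lemma_quantitative_cn_general a c s L ha hc hs hsL θ hθ hrec χ hχ
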